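/- Let G = W(H) be a whisker graph where H is a forest on n vertices. Then for every 1 ≤ q ≤ ν(G), the complex MF^q(G) is pure shellable of dimension n + q − 2; equivalently, the squarefree power I(G)^[q] is Cohen–Macaulay with depth(R/I(G)^[q]) = n + q − 1. -/

import Mathlib

variable {V : Type*}

/-- `M` is a set of pairwise disjoint edges of `G` with all endpoints in `F`. -/
def IsMatchingOn (G : SimpleGraph V) (F : Finset V) (M : Finset (Sym2 V)) : Prop :=
  (∀ e ∈ M, e ∈ G.edgeSet) ∧
  (∀ e ∈ M, ∀ v ∈ e, v ∈ F) ∧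
  (∀ e ∈ M, ∀ e' ∈ M, e ≠ e' → ∀ v ∈ e, v ∉ e')

/-- `F` is a face of the `q`-matching-free complex `MF^q(G)`. -/
def MFFace (G : SimpleGraph V) (q : ℕ) (F : Finset V) : Prop :=
  ¬ ∃ M : Finset (Sym2 V), IsMatchingOn G F M ∧ M.card = q

/-- `F` is a facet (maximal face) of the complex with face predicate `faces`. -/
def IsFacet (faces : Finset V → Prop) (F : Finset V) : Prop :=
  faces F ∧ ∀ F', faces F' → F ⊆ F' → F = F'

/-- Even-connection of `u` and `v` with respect to the pairwise disjoint edges in `M`. -/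
def EvenConnected (G : SimpleGraph V) (M : Finset (Sym2 V)) (u v : V) : Prop :=
  ∃ (r : ℕ) (p : ℕ → V), 1 ≤ r ∧ p 0 = u ∧ p (2 * r + 1) = v ∧
    (∀ k, k ≤ 2 * r → G.Adj (p k) (p (k + 1))) ∧
    (∀ k, k < r → s(p (2 * k + 1), p (2 * k + 2)) ∈ M) ∧
    (∀ k l, k < r → l < r →
      s(p (2 * k + 1), p (2 * k + 2)) = s(p (2 * l + 1), p (2 * l + 2)) → k = l)

/-- The set of vertices covered by the edges in `M`. -/
def mSupp (M : Finset (Sym2 V)) : Set V := {v | ∃ e ∈ M, v ∈ e}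

/-- The even-connection graph `G^{e₁⋯e_q}` (vertices covered by `M` are isolated). -/
def evenConnGraph (G : SimpleGraph V) (M : Finset (Sym2 V)) : SimpleGraph V where
  Adj x y := x ≠ y ∧ x ∉ mSupp M ∧ y ∉ mSupp M ∧
    (G.Adj x y ∨ EvenConnected G M x y ∨ EvenConnected G M y x)
  symm := by
    constructor
    rintro x y ⟨hne, hx, hy, h⟩
    refine ⟨hne.symm, hy, hx, ?_⟩
    rcases h with h | h | h
    · exact Or.inl h.symm
    · exact Or.inr (Or.inr h)
    · exact Or.inr (Or.inl h)
  loopless := ⟨fun x h => h.1 rfl⟩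

/-- Delete a set of vertices from a graph (keeping them as isolated vertices). -/
def delSet (G : SimpleGraph V) (S : Set V) : SimpleGraph V where
  Adj x y := G.Adj x y ∧ x ∉ S ∧ y ∉ S
  symm := ⟨fun x y ⟨h, hx, hy⟩ => ⟨h.symm, hy, hx⟩⟩
  loopless := ⟨fun x ⟨h, _, _⟩ => G.loopless.irrefl x h⟩

/-- The whisker graph `W(H)`: each vertex `x` (as `Sum.inl x`) gets a pendant
whisker vertex `Sum.inr x`. -/
def whisker (H : SimpleGraph V) : SimpleGraph (V ⊕ V) where
  Adj x y :=
    (∃ a b, x = Sum.inl a ∧ y = Sum.inl b ∧ H.Adj a b) ∨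
    (∃ a, (x = Sum.inl a ∧ y = Sum.inr a) ∨ (x = Sum.inr a ∧ y = Sum.inl a))
  symm := by
    constructor
    rintro x y (⟨a, b, hx, hy, hab⟩ | ⟨a, h | h⟩)
    · exact Or.inl ⟨b, a, hy, hx, hab.symm⟩
    · exact Or.inr ⟨a, Or.inr ⟨h.2, h.1⟩⟩
    · exact Or.inr ⟨a, Or.inl ⟨h.2, h.1⟩⟩
  loopless := by
    constructor
    rintro x (⟨a, b, hx, hy, hab⟩ | ⟨a, ⟨h1, h2⟩ | ⟨h1, h2⟩⟩)
    · obtain rfl := Sum.inl_injective (hx ▸ hy : (Sum.inl a : V ⊕ V) = Sum.inl b)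
      exact H.loopless.irrefl a hab
    · exact Sum.inl_ne_inr (h1 ▸ h2 : (Sum.inl a : V ⊕ V) = Sum.inr a)
    · exact Sum.inr_ne_inl (h1 ▸ h2 : (Sum.inr a : V ⊕ V) = Sum.inl a)

/-- Shellability of the complex with face predicate `faces`: there is a linear
order `F 0, F 1, …` of all facets such that each facet meets the union of the
previous ones in a pure subcomplex of codimension one. -/
def Shellable (faces : Finset V → Prop) : Prop :=
  ∃ (t : ℕ) (F : Fin t → Finset V),
    (∀ i, IsFacet faces (F i)) ∧
    (∀ F', IsFacet faces F' → ∃ i, F' = F i) ∧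
    Function.Injective F ∧
    ∀ k : Fin t, 0 < (k : ℕ) → ∀ σ : Finset V, σ ⊆ F k →
      (∃ i, i < k ∧ σ ⊆ F i) →
      ∃ τ : Finset V, σ ⊆ τ ∧ τ ⊆ F k ∧ (∃ i, i < k ∧ τ ⊆ F i) ∧
        τ.card = (F k).card - 1

/-- Vertex decomposability of the complex with face predicate `faces`. -/
inductive VertexDecomposable [DecidableEq V] : (Finset V → Prop) → Prop
  | simplex (faces : Finset V → Prop) (F : Finset V)
      (h : ∀ F', faces F' ↔ F' ⊆ F) : VertexDecomposable faces
  | shed (faces : Finset V → Prop) (v : V)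
      (hdel : VertexDecomposable (fun F => faces F ∧ v ∉ F))
      (hlink : VertexDecomposable (fun F => v ∉ F ∧ faces (insert v F)))
      (hshed : ∀ F, v ∉ F → faces (insert v F) →
        ¬ IsFacet (fun F' => faces F' ∧ v ∉ F') F) :
      VertexDecomposable faces

/-!
Write `x_i = inl i` and `y_i = inr i`. The matching number of `W(H)` on `A.disjSum B` is
`#(A ∩ B) + ν(H[A \ B])`: pendant edges `x_p y_p` for `p ∈ A ∩ B` plus a matching of
`H[A \ B]`. With maximality this pins down the facets of `MF^q(W(H))` for a forest `H`: they
are the sets `{x_i | i ∈ P ∪ D} ∪ {y_i | i ∉ D}` with `D` independent in `H`, `P ∩ D = ∅`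
and `#P = q - 1`, so all have `n + q - 1` elements. (If `D` had an edge, a leaf `v` of `H[D]` would
make its neighbour `y` essential for `ν(H[D])`, and `y_y` could be added to the facet.)

Order `V` so that every vertex has at most one earlier neighbour, as a forest allows, and shell
the facets by increasing `#D`, then decreasing colex order of `D`, then of `P`. Against an earlier
facet, either some `x_i` with `i ∈ P ∪ D` can be dropped by removing `i` from `D` (possibly
moving another element of `D` into `P`), or the two facets have the same `x`-part and one
exchanges the colex-largest `m ∈ D' \ D` with its unique earlier neighbour in `D`, or
`D = D' = ∅` and one exchanges inside `P`.
-/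

open Finset

namespace IsMatchingOn

variable {W : Type*} {G : SimpleGraph W} {F F' : Finset W} {M N : Finset (Sym2 W)}

lemma empty : IsMatchingOn G F ∅ := by
  simp [IsMatchingOn]

lemma subset (hM : IsMatchingOn G F M) (hNM : N ⊆ M) : IsMatchingOn G F N :=
  ⟨fun e he => hM.1 e (hNM he), fun e he => hM.2.1 e (hNM he),
    fun e he e' he' => hM.2.2 e (hNM he) e' (hNM he')⟩

lemma mono (hM : IsMatchingOn G F M) (hF : F ⊆ F') : IsMatchingOn G F' M :=
  ⟨hM.1, fun e he v hv => hF (hM.2.1 e he v hv), hM.2.2⟩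

lemma eq_of_mem (hM : IsMatchingOn G F M) {e e' : Sym2 W} (he : e ∈ M) (he' : e' ∈ M)
    {v : W} (hv : v ∈ e) (hv' : v ∈ e') : e = e' := by
  by_contra hne
  exact hM.2.2 e he e' he' hne v hv hv'

lemma card_le_of_forall_exists_mem (hM : IsMatchingOn G F M) {S : Finset W}
    (hS : ∀ e ∈ M, ∃ v ∈ S, v ∈ e) : #M ≤ #S :=
  card_le_card_of_forall_subsingleton (fun e v => v ∈ e) hS
    fun _ _ _ ⟨he, hv⟩ _ ⟨he', hv'⟩ => hM.eq_of_mem he he' hv hv'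

lemma insert_mk [DecidableEq W] (hM : IsMatchingOn G F M) {a b : W} (hab : G.Adj a b)
    (ha : a ∈ F) (hb : b ∈ F) (hfree : ∀ e ∈ M, a ∉ e ∧ b ∉ e) :
    IsMatchingOn G F (insert s(a, b) M) := by
  refine ⟨?_, ?_, ?_⟩
  · simpa [forall_mem_insert] using ⟨hab, hM.1⟩
  · simp only [forall_mem_insert, Sym2.mem_iff, forall_eq_or_imp, forall_eq]
    exact ⟨⟨ha, hb⟩, hM.2.1⟩
  · intro e he e' he' hne v hv hv'
    rcases mem_insert.1 he with rfl | heM <;> rcases mem_insert.1 he' with rfl | heM'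
    · exact hne rfl
    · rcases Sym2.mem_iff.1 hv with rfl | rfl
      exacts [(hfree e' heM').1 hv', (hfree e' heM').2 hv']
    · rcases Sym2.mem_iff.1 hv' with rfl | rfl
      exacts [(hfree e heM).1 hv, (hfree e heM).2 hv]
    · exact hM.2.2 e heM e' heM' hne v hv hv'

lemma union [DecidableEq W] {F₁ F₂ : Finset W} {M₁ M₂ : Finset (Sym2 W)}
    (h₁ : IsMatchingOn G F₁ M₁) (h₂ : IsMatchingOn G F₂ M₂) (hF : Disjoint F₁ F₂) :
    IsMatchingOn G (F₁ ∪ F₂) (M₁ ∪ M₂) := by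
  have cross : ∀ e ∈ M₁, ∀ e' ∈ M₂, ∀ v ∈ e, v ∉ e' := fun e he e' he' v hv hv' =>
    disjoint_left.1 hF (h₁.2.1 e he v hv) (h₂.2.1 e' he' v hv')
  refine ⟨?_, ?_, ?_⟩
  · simpa [or_imp, forall_and] using ⟨h₁.1, h₂.1⟩
  · simp only [mem_union, or_imp, forall_and]
    exact ⟨fun e he v hv => .inl (h₁.2.1 e he v hv),
      fun e he v hv => .inr (h₂.2.1 e he v hv)⟩
  · intro e he e' he' hne v hv hv'
    rcases mem_union.1 he with he | he <;> rcases mem_union.1 he' with he' | he'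
    exacts [h₁.2.2 e he e' he' hne v hv hv', cross e he e' he' v hv hv',
      cross e' he' e he v hv' hv, h₂.2.2 e he e' he' hne v hv hv']

end IsMatchingOn

section MatchingNumber

variable {W : Type*} [Fintype W] {G : SimpleGraph W} {F F' : Finset W} {M : Finset (Sym2 W)}
  {q : ℕ}

noncomputable def matchingNumberOn (G : SimpleGraph W) (F : Finset W) : ℕ :=
  open Classical in ({M : Finset (Sym2 W) | IsMatchingOn G F M} : Finset _).sup card

lemma IsMatchingOn.card_le_matchingNumberOn (hM : IsMatchingOn G F M) :
    #M ≤ matchingNumberOn G F := by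
  classical
  exact le_sup (f := card) (mem_filter.2 ⟨mem_univ M, hM⟩)

lemma matchingNumberOn_le {k : ℕ} (h : ∀ M, IsMatchingOn G F M → #M ≤ k) :
    matchingNumberOn G F ≤ k := by
  classical
  exact Finset.sup_le fun M hM => h M (mem_filter.1 hM).2

lemma exists_isMatchingOn_card_eq_matchingNumberOn (G : SimpleGraph W) (F : Finset W) :
    ∃ M, IsMatchingOn G F M ∧ #M = matchingNumberOn G F := by
  classical
  obtain ⟨M, hM, hcard⟩ := exists_mem_eq_sup
    ({M : Finset (Sym2 W) | IsMatchingOn G F M} : Finset _)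
    ⟨∅, mem_filter.2 ⟨mem_univ _, IsMatchingOn.empty⟩⟩ card
  exact ⟨M, (mem_filter.1 hM).2, hcard.symm⟩

lemma mfFace_iff_matchingNumberOn_lt : MFFace G q F ↔ matchingNumberOn G F < q := by
  refine ⟨fun hface => ?_, fun hlt ⟨M, hM, hcard⟩ =>
    (hcard ▸ hM.card_le_matchingNumberOn).not_gt hlt⟩
  by_contra! hle
  obtain ⟨M, hM, hcard⟩ := exists_isMatchingOn_card_eq_matchingNumberOn G F
  obtain ⟨N, hNM, hN⟩ := exists_subset_card_eq (hle.trans hcard.ge)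
  exact hface ⟨N, hM.subset hNM, hN⟩

lemma matchingNumberOn_mono (h : F ⊆ F') : matchingNumberOn G F ≤ matchingNumberOn G F' :=
  matchingNumberOn_le fun _ hM => (hM.mono h).card_le_matchingNumberOn

lemma matchingNumberOn_eq_zero_of_isIndepSet (hF : G.IsIndepSet (F : Set W)) :
    matchingNumberOn G F = 0 := by
  refine Nat.eq_zero_of_le_zero (matchingNumberOn_le fun M hM => ?_)
  rw [Nat.le_zero, card_eq_zero, eq_empty_iff_forall_notMem]
  intro e he
  induction e using Sym2.ind with
  | h a b =>
    have hab : G.Adj a b := hM.1 _ he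
    exact hF (hM.2.1 _ he a (Sym2.mem_mk_left a b)) (hM.2.1 _ he b (Sym2.mem_mk_right a b))
      hab.ne hab

lemma matchingNumberOn_add_matchingNumberOn_le_union [DecidableEq W] {F₁ F₂ : Finset W}
    (hF : Disjoint F₁ F₂) :
    matchingNumberOn G F₁ + matchingNumberOn G F₂ ≤ matchingNumberOn G (F₁ ∪ F₂) := by
  obtain ⟨M₁, h₁, hc₁⟩ := exists_isMatchingOn_card_eq_matchingNumberOn G F₁
  obtain ⟨M₂, h₂, hc₂⟩ := exists_isMatchingOn_card_eq_matchingNumberOn G F₂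
  have hM : Disjoint M₁ M₂ := disjoint_left.2 fun e he₁ he₂ => by
    induction e using Sym2.ind with
    | h a b =>
      exact disjoint_left.1 hF (h₁.2.1 _ he₁ a (by simp)) (h₂.2.1 _ he₂ a (by simp))
  rw [← hc₁, ← hc₂, ← card_union_of_disjoint hM]
  exact (h₁.union h₂ hF).card_le_matchingNumberOn

lemma matchingNumberOn_erase_add_one_le [DecidableEq W] {v y : W} (hv : v ∈ F) (hy : y ∈ F)
    (hvy : G.Adj v y) (huniq : ∀ u ∈ F, G.Adj v u → u = y) :
    matchingNumberOn G (F.erase y) + 1 ≤ matchingNumberOn G F := by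
  obtain ⟨N, hN, hcard⟩ := exists_isMatchingOn_card_eq_matchingNumberOn G (F.erase y)
  have hfree : ∀ e ∈ N, v ∉ e ∧ y ∉ e := by
    refine fun e he => ⟨fun hve => ?_, fun hye => (hN.2.1 e he y hye |> notMem_erase y F)⟩
    obtain ⟨u, rfl⟩ := Sym2.mem_iff_exists.1 hve
    have hu := mem_erase.1 (hN.2.1 _ he u (Sym2.mem_mk_right v u))
    exact hu.1 (huniq u hu.2 (hN.1 _ he))
  have hnew : s(v, y) ∉ N := fun h => (hfree _ h).1 (Sym2.mem_mk_left v y)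
  have := ((hN.mono (erase_subset y F)).insert_mk hvy hv hy hfree).card_le_matchingNumberOn
  rwa [card_insert_of_notMem hnew, hcard] at this

lemma IsFacet.exists_adj_le_matchingNumberOn_erase_add_one [DecidableEq W]
    (hF : IsFacet (MFFace G q) F) {z : W} (hz : z ∉ F) :
    ∃ w ∈ F, G.Adj z w ∧ q ≤ matchingNumberOn G (F.erase w) + 1 := by
  have hnot : ¬ MFFace G q (insert z F) := fun h =>
    hz (hF.2 _ h (subset_insert z F) ▸ mem_insert_self z F)
  obtain ⟨M, hM, hcard⟩ := not_not.1 hnot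
  obtain ⟨e, he, hze⟩ : ∃ e ∈ M, z ∈ e := by
    by_contra! hfree
    refine hF.1 ⟨M, ⟨hM.1, fun e he v hv => ?_, hM.2.2⟩, hcard⟩
    rcases mem_insert.1 (hM.2.1 e he v hv) with rfl | hvF
    exacts [absurd hv (hfree e he), hvF]
  obtain ⟨w, rfl⟩ := Sym2.mem_iff_exists.1 hze
  have hzw : G.Adj z w := hM.1 _ he
  have hwF : w ∈ F := (mem_insert.1 (hM.2.1 _ he w (Sym2.mem_mk_right z w))).resolve_left hzw.ne'
  have hrest : IsMatchingOn G (F.erase w) (M.erase s(z, w)) := by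
    refine ⟨fun e he' => hM.1 e (mem_of_mem_erase he'), fun e he' v hv => ?_,
      (hM.subset (erase_subset _ M)).2.2⟩
    obtain ⟨hne, heM⟩ := mem_erase.1 he'
    have hvzw := hM.2.2 e heM _ he hne v hv
    rcases mem_insert.1 (hM.2.1 e heM v hv) with rfl | hvF
    · exact absurd (Sym2.mem_mk_left v w) hvzw
    · exact mem_erase.2 ⟨fun h => hvzw (h ▸ Sym2.mem_mk_right z w), hvF⟩
  have := hrest.card_le_matchingNumberOn
  rw [card_erase_of_mem he, hcard] at this
  exact ⟨w, hwF, hzw, by omega⟩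

lemma IsFacet.le_matchingNumberOn_add_one [DecidableEq W] (hF : IsFacet (MFFace G q) F)
    (hne : F ≠ univ) : q ≤ matchingNumberOn G F + 1 := by
  obtain ⟨z, -, hz⟩ := exists_of_ssubset (ssubset_univ_iff.2 hne)
  obtain ⟨w, -, -, hq⟩ := hF.exists_adj_le_matchingNumberOn_erase_add_one hz
  exact hq.trans (Nat.add_le_add_right (matchingNumberOn_mono (erase_subset w F)) 1)

end MatchingNumber

namespace SimpleGraph.IsAcyclic

variable {V : Type*} [Fintype V] {H : SimpleGraph V}

lemma exists_subsingleton_inter_neighborSet (hH : H.IsAcyclic) {S : Set V} (hS : S.Nonempty) :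
    ∃ v ∈ S, (S ∩ H.neighborSet v).Subsingleton := by
  classical
  -- the start of a longest path inside `S` works, by uniqueness of paths in a forest
  let IsLength : ℕ → Prop := fun ℓ =>
    ∃ (u w : V) (p : H.Walk u w), p.IsPath ∧ (∀ x ∈ p.support, x ∈ S) ∧ p.length = ℓ
  have hbound : ∀ ℓ, IsLength ℓ → ℓ ≤ Fintype.card V := by
    rintro ℓ ⟨u, w, p, hp, -, rfl⟩
    exact hp.length_lt.le
  obtain ⟨v₀, hv₀⟩ := hS
  have h₀ : IsLength 0 := ⟨v₀, v₀, .nil, .nil, by simpa using hv₀, rfl⟩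
  obtain ⟨u, w, p, hp, hpS, hlen⟩ := Nat.findGreatest_spec (hbound 0 h₀) h₀
  refine ⟨u, hpS u p.start_mem_support, fun c ⟨hcS, hc⟩ c' ⟨hc'S, hc'⟩ => ?_⟩
  have hsnd : ∀ c ∈ S, H.Adj u c → c = p.snd := by
    intro c hcS hc
    by_contra hne
    have hcp : c ∉ p.support := fun hcp => hne (hH.eq_snd_of_adj_start hp hc hcp)
    have hlong : IsLength (Nat.findGreatest IsLength (Fintype.card V) + 1) := by
      refine ⟨c, w, .cons hc.symm p, hp.cons hcp, ?_, by simp [hlen]⟩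
      simpa [Walk.support_cons] using ⟨hcS, hpS⟩
    exact (Nat.le_findGreatest (hbound _ hlong) hlong).not_gt (Nat.lt_succ_self _)
  exact (hsnd c hcS hc).trans (hsnd c' hc'S hc').symm

lemma exists_adj_forall_adj_eq_of_not_isIndepSet (hH : H.IsAcyclic) {D : Set V}
    (hD : ¬ H.IsIndepSet D) :
    ∃ v ∈ D, ∃ y ∈ D, H.Adj v y ∧ ∀ u ∈ D, H.Adj v u → u = y := by
  obtain ⟨a, ha, b, hb, -, hab⟩ : ∃ a ∈ D, ∃ b ∈ D, a ≠ b ∧ H.Adj a b := by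
    simpa [IsIndepSet, Set.Pairwise] using hD
  obtain ⟨v, ⟨hvD, y, hyD, hvy⟩, hv⟩ := hH.exists_subsingleton_inter_neighborSet
    (S := {x ∈ D | ∃ y ∈ D, H.Adj x y}) ⟨a, ha, b, hb, hab⟩
  exact ⟨v, hvD, y, hyD, hvy, fun u huD hvu =>
    hv ⟨⟨huD, v, hvD, hvu.symm⟩, hvu⟩ ⟨⟨hyD, v, hvD, hvy.symm⟩, hvy⟩⟩

lemma exists_elimination_order (hH : H.IsAcyclic) :
    ∃ wt : V → ℕ, Function.Injective wt ∧
      ∀ v, {u | H.Adj v u ∧ wt u < wt v}.Subsingleton := by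
  classical
  suffices h : ∀ S : Finset V, ∃ wt : V → ℕ, Set.InjOn wt S ∧
      ∀ v ∈ S, {u | u ∈ S ∧ H.Adj v u ∧ wt u < wt v}.Subsingleton by
    obtain ⟨wt, hinj, hsub⟩ := h univ
    exact ⟨wt, fun a b hab => hinj (by simp) (by simp) hab,
      fun v => by simpa using hsub v (mem_univ v)⟩
  intro S
  induction S using Finset.strongInduction with
  | H S ih =>
    obtain rfl | hS := S.eq_empty_or_nonempty
    · exact ⟨fun _ => 0, by simp, by simp⟩
    obtain ⟨v, hvS, hv⟩ := hH.exists_subsingleton_inter_neighborSet (S := (S : Set V)) hS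
    obtain ⟨wt, hinj, hsub⟩ := ih (S.erase v) (erase_ssubset hvS)
    set top := (S.erase v).sup wt + 1
    have hlt : ∀ u ∈ S.erase v, wt u < top := fun u hu =>
      Nat.lt_succ_of_le (le_sup hu)
    have hother : ∀ u, u ≠ v → Function.update wt v top u = wt u := fun u hu =>
      Function.update_of_ne hu _ _
    refine ⟨Function.update wt v top, fun a ha b hb hab => ?_, fun x hx => ?_⟩
    · by_cases hav : a = v <;> by_cases hbv : b = v
      · exact hav.trans hbv.symm
      · rw [hav, Function.update_self, hother b hbv] at hab
        exact absurd hab (hlt b (mem_erase.2 ⟨hbv, hb⟩)).ne'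
      · rw [hbv, Function.update_self, hother a hav] at hab
        exact absurd hab (hlt a (mem_erase.2 ⟨hav, ha⟩)).ne
      · rw [hother a hav, hother b hbv] at hab
        exact hinj (mem_erase.2 ⟨hav, ha⟩) (mem_erase.2 ⟨hbv, hb⟩) hab
    by_cases hxv : x = v
    · subst hxv
      exact hv.anti fun u hu => ⟨hu.1, hu.2.1⟩
    refine (hsub x (mem_erase.2 ⟨hxv, hx⟩)).anti fun u ⟨huS, hxu, hu⟩ => ?_
    rw [hother x hxv] at hu
    have huv : u ≠ v := by
      rintro rfl
      rw [Function.update_self] at hu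
      exact (hlt x (mem_erase.2 ⟨hxv, hx⟩)).not_gt hu
    rw [hother u huv] at hu
    exact ⟨mem_erase.2 ⟨huv, huS⟩, hxu, hu⟩

end SimpleGraph.IsAcyclic

section Embedding

variable {V W : Type*} {G : SimpleGraph V} {G' : SimpleGraph W}

lemma IsMatchingOn.map (f : G ↪g G') {F : Finset V} {N : Finset (Sym2 V)}
    (hN : IsMatchingOn G F N) :
    IsMatchingOn G' (F.map f.toEmbedding) (N.map f.toEmbedding.sym2Map) := by
  refine ⟨?_, ?_, ?_⟩
  · simp only [forall_mem_map]
    exact fun e he => f.map_mem_edgeSet_iff.2 (hN.1 e he)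
  · simp only [forall_mem_map, Function.Embedding.sym2Map_apply, Sym2.mem_map]
    rintro e he _ ⟨a, ha, rfl⟩
    exact mem_map_of_mem _ (hN.2.1 e he a ha)
  · simp only [forall_mem_map, Function.Embedding.sym2Map_apply, Sym2.mem_map]
    rintro e he e' he' hne _ ⟨a, ha, rfl⟩ ⟨a', ha', hfa⟩
    rw [f.injective hfa] at ha'
    exact hN.2.2 e he e' he' (fun h => hne (h ▸ rfl)) a ha ha'

lemma matchingNumberOn_map [Fintype V] [Fintype W] (f : G ↪g G') (F : Finset V) :
    matchingNumberOn G' (F.map f.toEmbedding) = matchingNumberOn G F := by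
  classical
  refine le_antisymm (matchingNumberOn_le fun M hM => ?_) ?_
  · let N : Finset (Sym2 V) := {e | Sym2.map f e ∈ M}
    have hNM : N.map f.toEmbedding.sym2Map = M := by
      refine Finset.Subset.antisymm (fun e he => ?_) fun e he => ?_
      · obtain ⟨e', he', rfl⟩ := mem_map.1 he
        exact (mem_filter.1 he').2
      · induction e using Sym2.ind with
        | h x y =>
          obtain ⟨a, -, rfl⟩ := mem_map.1 (hM.2.1 _ he x (Sym2.mem_mk_left x y))
          obtain ⟨b, -, rfl⟩ := mem_map.1 (hM.2.1 _ he _ (Sym2.mem_mk_right _ y))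
          exact mem_map.2 ⟨s(a, b), mem_filter.2 ⟨mem_univ _, he⟩, rfl⟩
    have hN : IsMatchingOn G F N := by
      refine ⟨fun e he => ?_, fun e he a ha => ?_, fun e he e' he' hne a ha ha' => ?_⟩
      · exact f.map_mem_edgeSet_iff.1 (hM.1 _ (mem_filter.1 he).2)
      · obtain ⟨b, hb, hab⟩ := mem_map.1
          (hM.2.1 _ (mem_filter.1 he).2 (f a) (Sym2.mem_map.2 ⟨a, ha, rfl⟩))
        exact f.injective hab ▸ hb
      · exact hM.2.2 _ (mem_filter.1 he).2 _ (mem_filter.1 he').2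
          (fun h => hne (Sym2.map.injective f.injective h)) (f a)
          (Sym2.mem_map.2 ⟨a, ha, rfl⟩) (Sym2.mem_map.2 ⟨a, ha', rfl⟩)
    rw [← hNM, card_map]
    exact hN.card_le_matchingNumberOn
  · obtain ⟨N, hN, hcard⟩ := exists_isMatchingOn_card_eq_matchingNumberOn G F
    rw [← hcard, ← card_map f.toEmbedding.sym2Map]
    exact (hN.map f).card_le_matchingNumberOn

end Embedding

section Whisker

variable {V : Type*} {H : SimpleGraph V}

@[simp] lemma whisker_adj_inl_inl {a b : V} :
    (whisker H).Adj (.inl a) (.inl b) ↔ H.Adj a b := by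
  simp [whisker]

@[simp] lemma whisker_adj_inl_inr {a b : V} : (whisker H).Adj (.inl a) (.inr b) ↔ a = b := by
  simp [whisker, eq_comm]

@[simp] lemma whisker_adj_inr {a : V} {w : V ⊕ V} :
    (whisker H).Adj (.inr a) w ↔ w = .inl a := by
  cases w <;> simp [whisker, eq_comm]

def whiskerInl (H : SimpleGraph V) : H ↪g whisker H :=
  ⟨Function.Embedding.inl, whisker_adj_inl_inl⟩

lemma whisker_inl_mem_of_inr_mem {e : Sym2 (V ⊕ V)} (he : e ∈ (whisker H).edgeSet) {a : V}
    (ha : .inr a ∈ e) : .inl a ∈ e := by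
  obtain ⟨w, rfl⟩ := Sym2.mem_iff_exists.1 ha
  obtain rfl := whisker_adj_inr.1 ((whisker H).mem_edgeSet.1 he)
  exact Sym2.mem_mk_right _ _

variable [Fintype V] [DecidableEq V]

lemma card_le_matchingNumberOn_whisker_disjSum_self (P : Finset V) :
    #P ≤ matchingNumberOn (whisker H) (P.disjSum P) := by
  have hM : IsMatchingOn (whisker H) (P.disjSum P) (P.image fun p => s(.inl p, .inr p)) := by
    refine ⟨?_, ?_, ?_⟩ <;> simp only [forall_mem_image]
    · exact fun p _ => whisker_adj_inl_inr.2 rfl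
    · intro p hp v hv
      rcases Sym2.mem_iff.1 hv with rfl | rfl <;> simpa using hp
    · intro p _ p' _ hne v hv hv'
      rcases Sym2.mem_iff.1 hv with rfl | rfl <;> simp_all
  have := hM.card_le_matchingNumberOn
  rwa [card_image_of_injective _ fun p p' h => by simpa using h] at this

theorem matchingNumberOn_whisker_disjSum (A B : Finset V) :
    matchingNumberOn (whisker H) (A.disjSum B) = #(A ∩ B) + matchingNumberOn H (A \ B) := by
  classical
  have hinl (C : Finset V) : matchingNumberOn (whisker H) (C.map .inl) = matchingNumberOn H C :=
    matchingNumberOn_map (whiskerInl H) C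
  refine le_antisymm (matchingNumberOn_le fun M hM => ?_) ?_
  · -- split `M` into the edges through some `x_p`, `p ∈ A ∩ B`, and edges of `H[A \ B]`
    let S := (A ∩ B).map (.inl : V ↪ V ⊕ V)
    have h₁ : #{e ∈ M | ∃ v ∈ S, v ∈ e} ≤ #(A ∩ B) := by
      have := (hM.subset (filter_subset (fun e => ∃ v ∈ S, v ∈ e) M))
        |>.card_le_of_forall_exists_mem fun e he => (mem_filter.1 he).2
      rwa [card_map] at this
    have h₂ : #{e ∈ M | ¬ ∃ v ∈ S, v ∈ e} ≤ matchingNumberOn H (A \ B) := by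
      rw [← hinl]
      refine IsMatchingOn.card_le_matchingNumberOn ⟨fun e he => hM.1 e (mem_filter.1 he).1,
        fun e he v hv => ?_, (hM.subset (filter_subset _ M)).2.2⟩
      obtain ⟨heM, hfree⟩ := mem_filter.1 he
      simp only [not_exists, not_and] at hfree
      have hvF := hM.2.1 e heM v hv
      cases v with
      | inl a =>
        have ha : a ∈ A := by simpa using hvF
        have haB : a ∉ B := fun haB => hfree _ (by simp [S, ha, haB]) hv
        simpa using ⟨ha, haB⟩
      | inr b =>
        have hl := whisker_inl_mem_of_inr_mem (hM.1 e heM) hv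
        have hb : b ∈ A ∩ B :=
          mem_inter.2 ⟨inl_mem_disjSum.1 (hM.2.1 e heM _ hl), inr_mem_disjSum.1 hvF⟩
        exact absurd hl (hfree _ (by simpa [S] using hb))
    have := card_filter_add_card_filter_not (s := M) (fun e => ∃ v ∈ S, v ∈ e)
    omega
  · have hdisj : Disjoint ((A ∩ B).disjSum (A ∩ B)) ((A \ B).map .inl) := by
      simp only [disjoint_left, mem_map, Function.Embedding.inl_apply, mem_sdiff, not_exists,
        not_and]
      rintro _ hz a ⟨-, haB⟩ rfl
      exact haB (mem_inter.1 (inl_mem_disjSum.1 hz)).2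
    have hsub : (A ∩ B).disjSum (A ∩ B) ∪ (A \ B).map .inl ⊆ A.disjSum B := by
      refine union_subset (disjSum_mono inter_subset_left inter_subset_right) fun z hz => ?_
      obtain ⟨a, ha, rfl⟩ := mem_map.1 hz
      exact inl_mem_disjSum.2 (mem_sdiff.1 ha).1
    calc #(A ∩ B) + matchingNumberOn H (A \ B)
        ≤ matchingNumberOn (whisker H) ((A ∩ B).disjSum (A ∩ B)) +
            matchingNumberOn (whisker H) ((A \ B).map .inl) :=
          add_le_add (card_le_matchingNumberOn_whisker_disjSum_self _) (hinl _).ge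
      _ ≤ matchingNumberOn (whisker H) ((A ∩ B).disjSum (A ∩ B) ∪ (A \ B).map .inl) :=
          matchingNumberOn_add_matchingNumberOn_le_union hdisj
      _ ≤ matchingNumberOn (whisker H) (A.disjSum B) := matchingNumberOn_mono hsub

lemma matchingNumberOn_whisker_univ : matchingNumberOn (whisker H) univ = Fintype.card V := by
  rw [← univ_disjSum_univ, matchingNumberOn_whisker_disjSum, inter_self, sdiff_self,
    matchingNumberOn_eq_zero_of_isIndepSet (by simp), add_zero, card_univ]

end Whisker

section Facets

variable {V : Type*} [Fintype V] [DecidableEq V] {H : SimpleGraph V} {q : ℕ} {P D : Finset V}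
  {F : Finset (V ⊕ V)}

def whiskerFacet (P D : Finset V) : Finset (V ⊕ V) := (P ∪ D).disjSum Dᶜ

@[simp] lemma inl_mem_whiskerFacet {a : V} : .inl a ∈ whiskerFacet P D ↔ a ∈ P ∪ D :=
  inl_mem_disjSum

@[simp] lemma inr_mem_whiskerFacet {a : V} : .inr a ∈ whiskerFacet P D ↔ a ∉ D := by
  simp [whiskerFacet]

structure IsFacetPair (H : SimpleGraph V) (q : ℕ) (P D : Finset V) : Prop where
  card_add_one : #P + 1 = q
  disjoint : Disjoint P D
  isIndepSet : H.IsIndepSet D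

lemma card_whiskerFacet (h : Disjoint P D) : #(whiskerFacet P D) = Fintype.card V + #P := by
  rw [whiskerFacet, card_disjSum, card_union_of_disjoint h, card_compl]
  have := card_le_univ D
  omega

lemma whiskerFacet_erase_inl {y : V} (hy : y ∉ P) :
    (whiskerFacet P D).erase (.inl y) = (P ∪ D.erase y).disjSum Dᶜ := by
  ext z
  cases z with
  | inl a => by_cases hay : a = y <;> simp_all [whiskerFacet]
  | inr b => simp [whiskerFacet]

lemma matchingNumberOn_whisker_union_disjSum_compl {D' : Finset V} (hPD : Disjoint P D)
    (hD' : D' ⊆ D) :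
    matchingNumberOn (whisker H) ((P ∪ D').disjSum Dᶜ) = #P + matchingNumberOn H D' := by
  have hP : ∀ a ∈ P, a ∉ D := fun _ => (disjoint_left.1 hPD ·)
  rw [matchingNumberOn_whisker_disjSum]
  congr 2 <;> ext a <;> simp only [mem_inter, mem_union, mem_compl, mem_sdiff, not_not]
  · exact ⟨fun h => h.1.resolve_right fun ha => h.2 (hD' ha), fun h => ⟨.inl h, hP a h⟩⟩
  · exact ⟨fun h => h.1.resolve_left fun ha => hP a ha h.2, fun h => ⟨.inr h, hD' h⟩⟩

lemma matchingNumberOn_whiskerFacet (h : Disjoint P D) :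
    matchingNumberOn (whisker H) (whiskerFacet P D) = #P + matchingNumberOn H D :=
  matchingNumberOn_whisker_union_disjSum_compl h subset_rfl

theorem IsFacetPair.isFacet (h : IsFacetPair H q P D) :
    IsFacet (MFFace (whisker H) q) (whiskerFacet P D) := by
  obtain ⟨hcard, hPD, hind⟩ := h
  refine ⟨?_, fun F hF hsub => ?_⟩
  · rw [mfFace_iff_matchingNumberOn_lt, matchingNumberOn_whiskerFacet hPD,
      matchingNumberOn_eq_zero_of_isIndepSet hind]
    omega
  by_contra hne
  obtain ⟨z, hzF, hz⟩ := exists_of_ssubset (hsub.ssubset_of_ne hne)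
  -- `z` is `x_j` or `y_j` for a `j ∉ P` with both `x_j, y_j ∈ F`: a `q`-matching by pendants
  obtain ⟨j, hjP, hjl, hjr⟩ : ∃ j ∉ P, .inl j ∈ F ∧ .inr j ∈ F := by
    cases z with
    | inl j =>
      have hj : j ∉ P ∪ D := by simpa using hz
      exact ⟨j, fun h => hj (mem_union_left D h), hzF, hsub (by simp_all)⟩
    | inr j =>
      have hj : j ∈ D := by simpa using hz
      exact ⟨j, fun h => disjoint_left.1 hPD h hj, hsub (by simp [hj]), hzF⟩
  have hPF : ∀ p ∈ P, .inl p ∈ F ∧ .inr p ∈ F := fun p hp =>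
    ⟨hsub (by simp [hp]), hsub (by simpa using disjoint_left.1 hPD hp)⟩
  have hsubF : (insert j P).disjSum (insert j P) ⊆ F := by
    rw [disjSum_subset]
    constructor <;> intro p hp <;> rcases mem_insert.1 hp with rfl | hp
    exacts [mem_toLeft.2 hjl, mem_toLeft.2 (hPF p hp).1, mem_toRight.2 hjr,
      mem_toRight.2 (hPF p hp).2]
  have := (card_le_matchingNumberOn_whisker_disjSum_self (H := H) _).trans
    (matchingNumberOn_mono hsubF)
  rw [card_insert_of_notMem hjP, hcard] at this
  exact (mfFace_iff_matchingNumberOn_lt.1 hF).not_ge this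

lemma IsFacet.inl_mem_of_inr_notMem (hF : IsFacet (MFFace (whisker H) q) F) {d : V}
    (hd : .inr d ∉ F) :
    .inl d ∈ F ∧ q ≤ matchingNumberOn (whisker H) (F.erase (.inl d)) + 1 := by
  obtain ⟨w, hwF, hdw, hq⟩ := hF.exists_adj_le_matchingNumberOn_erase_add_one hd
  obtain rfl := whisker_adj_inr.1 hdw
  exact ⟨hwF, hq⟩

theorem IsFacet.exists_isFacetPair (hH : H.IsAcyclic) (hqn : q ≤ Fintype.card V)
    (hF : IsFacet (MFFace (whisker H) q) F) :
    ∃ P D, IsFacetPair H q P D ∧ F = whiskerFacet P D := by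
  set D := F.toRightᶜ
  set P := F.toLeft ∩ F.toRight
  have hPD : Disjoint P D := disjoint_left.2 fun a ha => by simpa [D] using (mem_inter.1 ha).2
  have hFeq : F = whiskerFacet P D := by
    ext z
    cases z with
    | inl a =>
      simp only [inl_mem_whiskerFacet, mem_union, mem_inter, mem_compl, mem_toLeft, mem_toRight,
        P, D]
      exact ⟨fun h => (em _).imp (⟨h, ·⟩) id,
        fun h => h.elim And.left fun hr => (hF.inl_mem_of_inr_notMem hr).1⟩
    | inr b => simp [P, D]
  have hν : matchingNumberOn (whisker H) F = #P + matchingNumberOn H D :=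
    hFeq ▸ matchingNumberOn_whiskerFacet hPD
  have hface := mfFace_iff_matchingNumberOn_lt.1 hF.1
  have hind : H.IsIndepSet D := by
    -- otherwise some `y ∈ D` is covered by every maximum matching of `H[D]`, so `y_y` could be
    -- added to `F`
    by_contra hD
    obtain ⟨v, hv, y, hy, hvy, huniq⟩ := hH.exists_adj_forall_adj_eq_of_not_isIndepSet hD
    have h₁ := matchingNumberOn_erase_add_one_le hv hy hvy huniq
    have h₂ := (hF.inl_mem_of_inr_notMem (by simpa [D] using hy)).2
    rw [hFeq, whiskerFacet_erase_inl (disjoint_right.1 hPD hy),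
      matchingNumberOn_whisker_union_disjSum_compl hPD (erase_subset y D)] at h₂
    omega
  have hFne : F ≠ univ := by
    rintro rfl
    have := matchingNumberOn_whisker_univ (H := H)
    omega
  have hq := hF.le_matchingNumberOn_add_one hFne
  rw [hν, matchingNumberOn_eq_zero_of_isIndepSet hind] at hq hface
  exact ⟨P, D, ⟨by omega, hPD, hind⟩, hFeq⟩

end Facets

theorem shellable_of_exchange {V β : Type*} [Fintype V] [DecidableEq V] [LinearOrder β]
    {faces : Finset V → Prop} (key : Finset V → β)
    (hinj : ∀ F G, IsFacet faces F → IsFacet faces G → key F = key G → F = G)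
    (hexch : ∀ F G, IsFacet faces F → IsFacet faces G → key G < key F →
      ∃ v ∈ F, v ∉ G ∧ ∃ F', IsFacet faces F' ∧ key F' < key F ∧ F.erase v ⊆ F') :
    Shellable faces := by
  classical
  let ks := ({F | IsFacet faces F} : Finset (Finset V)).image key
  let e := ks.orderIsoOfFin rfl
  choose facet hfacet hkey using fun i => mem_image.1 (e i).2
  have hfacet' (i) : IsFacet faces (facet i) := (mem_filter.1 (hfacet i)).2
  have hlt (i j) : key (facet i) < key (facet j) ↔ i < j := by
    rw [hkey, hkey, Subtype.coe_lt_coe, e.lt_iff_lt]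
  have hall (F) (hF : IsFacet faces F) : ∃ i, facet i = F := by
    have hF' : key F ∈ ks := mem_image_of_mem key (mem_filter.2 ⟨mem_univ F, hF⟩)
    exact ⟨e.symm ⟨key F, hF'⟩, hinj _ _ (hfacet' _) hF (by simp [hkey])⟩
  refine ⟨_, facet, hfacet', fun F hF => (hall F hF).imp fun _ h => h.symm,
    fun i j h => e.injective (Subtype.ext (by rw [← hkey, ← hkey, h])),
    fun k _ σ hσk ⟨i, hik, hσi⟩ => ?_⟩
  obtain ⟨v, hvk, hvi, F, hF, hFk, hsub⟩ := hexch _ _ (hfacet' k) (hfacet' i) ((hlt i k).2 hik)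
  obtain ⟨j, rfl⟩ := hall F hF
  refine ⟨(facet k).erase v, fun x hx => mem_erase.2 ⟨?_, hσk hx⟩, erase_subset v _,
    ⟨j, (hlt j k).1 hFk, hsub⟩, card_erase_of_mem hvk⟩
  rintro rfl
  exact hvi (hσi hx)

section Shelling

variable {V : Type*} {P D P' D' : Finset V}

/-- Facets are shelled by increasing `#D`, then by decreasing colex order of `D` and of `P`. -/
def pairKey (P D : Finset V) : ℕ ×ₗ (Colex (Finset V))ᵒᵈ ×ₗ (Colex (Finset V))ᵒᵈ :=
  toLex (#D, toLex (OrderDual.toDual (toColex D), OrderDual.toDual (toColex P)))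

lemma pairKey_injective (h : pairKey P D = pairKey P' D') : P = P' ∧ D = D' := by
  simp only [pairKey, toLex_inj, Prod.mk.injEq, OrderDual.toDual_inj, toColex_inj] at h
  exact ⟨h.2.2, h.2.1⟩

variable [LinearOrder V]

lemma pairKey_lt_iff : pairKey P' D' < pairKey P D ↔
    #D' < #D ∨ #D' = #D ∧ (toColex D < toColex D' ∨ D' = D ∧ toColex P < toColex P') := by
  simp only [pairKey, Prod.Lex.toLex_lt_toLex, OrderDual.toDual_lt_toDual, OrderDual.toDual_inj,
    toColex_inj]

variable [Fintype V] {H : SimpleGraph V} {q : ℕ}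

def ErasureCoveredEarlier (H : SimpleGraph V) (q : ℕ) (P D : Finset V) (v : V ⊕ V) : Prop :=
  ∃ P₂ D₂, IsFacetPair H q P₂ D₂ ∧ pairKey P₂ D₂ < pairKey P D ∧
    (whiskerFacet P D).erase v ⊆ whiskerFacet P₂ D₂

namespace IsFacetPair

lemma erasureCoveredEarlier_inl_of_mem_right (h : IsFacetPair H q P D) {d : V} (hd : d ∈ D) :
    ErasureCoveredEarlier H q P D (.inl d) := by
  refine ⟨P, D.erase d, ⟨h.card_add_one, disjoint_of_subset_right (erase_subset d D) h.disjoint,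
    h.isIndepSet.mono (coe_subset.2 (erase_subset d D))⟩,
    pairKey_lt_iff.2 (.inl (card_erase_lt_of_mem hd)), fun z hz => ?_⟩
  cases z <;> simp_all

lemma erasureCoveredEarlier_inl_of_mem_left (h : IsFacetPair H q P D) {c d : V} (hc : c ∈ P)
    (hd : d ∈ D) :
    ErasureCoveredEarlier H q P D (.inl c) := by
  have hdP : d ∉ P.erase c := fun hdP => disjoint_left.1 h.disjoint (mem_of_mem_erase hdP) hd
  refine ⟨insert d (P.erase c), D.erase d,
    ⟨?_, ?_, h.isIndepSet.mono (coe_subset.2 (erase_subset d D))⟩,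
    pairKey_lt_iff.2 (.inl (card_erase_lt_of_mem hd)), fun z hz => ?_⟩
  · rw [card_insert_of_notMem hdP, card_erase_add_one hc, h.card_add_one]
  · simp only [disjoint_insert_left, notMem_erase, not_false_eq_true, true_and]
    exact disjoint_of_subset_left (erase_subset c P)
      (disjoint_of_subset_right (erase_subset d D) h.disjoint)
  · cases z <;> simp_all
    tauto

lemma erasureCoveredEarlier_inr (h : IsFacetPair H q P D) {m e : V} (hm : m ∈ P) (he : e ∈ D)
    (hem : e < m) (huniq : ∀ u ∈ D, H.Adj m u → u = e) :
    ErasureCoveredEarlier H q P D (.inr m) := by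
  have hmD : m ∉ D := disjoint_left.1 h.disjoint hm
  have heP : e ∉ P := disjoint_right.1 h.disjoint he
  have hmD' : m ∉ D.erase e := fun h => hmD (mem_of_mem_erase h)
  refine ⟨insert e (P.erase m), insert m (D.erase e), ⟨?_, ?_, ?_⟩,
    pairKey_lt_iff.2 (.inr ⟨?_, .inl ?_⟩), fun z hz => ?_⟩
  · rw [card_insert_of_notMem fun h => heP (mem_of_mem_erase h), card_erase_add_one hm,
      h.card_add_one]
  · rw [disjoint_insert_left, disjoint_insert_right]
    exact ⟨by simp [hem.ne], notMem_erase m P,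
      disjoint_of_subset_left (erase_subset m P)
        (disjoint_of_subset_right (erase_subset e D) h.disjoint)⟩
  · have hm_indep : ∀ u ∈ D.erase e, ¬ H.Adj m u := fun u hu hmu =>
      (mem_erase.1 hu).1 (huniq u (mem_of_mem_erase hu) hmu)
    rw [coe_insert, SimpleGraph.IsIndepSet, Set.pairwise_insert]
    exact ⟨h.isIndepSet.mono (coe_subset.2 (erase_subset e D)),
      fun u hu _ => ⟨hm_indep u hu, fun hum => hm_indep u hu hum.symm⟩⟩
  · rw [card_insert_of_notMem hmD', card_erase_add_one he]
  · conv_lhs => rw [← insert_erase he]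
    exact (Colex.insert_lt_insert (notMem_erase e D) hmD').2 hem
  · cases z <;> simp_all
    tauto

lemma erasureCoveredEarlier_inl_of_right_eq_empty (h : IsFacetPair H q P D) (hD : D = ∅)
    {c m : V} (hc : c ∈ P) (hm : m ∉ P) (hcm : c < m) :
    ErasureCoveredEarlier H q P D (.inl c) := by
  subst hD
  have hmP' : m ∉ P.erase c := fun h => hm (mem_of_mem_erase h)
  refine ⟨insert m (P.erase c), ∅, ⟨?_, disjoint_empty_right _, by simp⟩,
    pairKey_lt_iff.2 (.inr ⟨rfl, .inr ⟨rfl, ?_⟩⟩), fun z hz => ?_⟩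
  · rw [card_insert_of_notMem hmP', card_erase_add_one hc, h.card_add_one]
  · conv_lhs => rw [← insert_erase hc]
    exact (Colex.insert_lt_insert (notMem_erase c P) hmP').2 hcm
  · cases z <;> simp_all

lemma exists_erasureCoveredEarlier_of_not_subset (h : IsFacetPair H q P D) (hD : D.Nonempty)
    (hsub : ¬ P ∪ D ⊆ P' ∪ D') :
    ∃ v ∈ whiskerFacet P D, v ∉ whiskerFacet P' D' ∧ ErasureCoveredEarlier H q P D v := by
  obtain ⟨x, hx, hx'⟩ := not_subset.1 hsub
  refine ⟨.inl x, by simpa using hx, by simpa using hx', ?_⟩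
  rcases mem_union.1 hx with hxP | hxD
  · obtain ⟨d, hd⟩ := hD
    exact h.erasureCoveredEarlier_inl_of_mem_left hxP hd
  · exact h.erasureCoveredEarlier_inl_of_mem_right hxD

lemma exists_erasureCoveredEarlier_of_toColex_lt (h : IsFacetPair H q P D)
    (hord : ∀ v, {u | H.Adj v u ∧ u < v}.Subsingleton) (h' : IsFacetPair H q P' D')
    (hcard : #D' = #D) (hD : toColex D < toColex D') :
    ∃ v ∈ whiskerFacet P D, v ∉ whiskerFacet P' D' ∧ ErasureCoveredEarlier H q P D v := by
  obtain ⟨m, hmD', hmD, hm⟩ := Colex.toColex_lt_toColex_iff_exists_forall_lt.1 hD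
  have hDne : D.Nonempty := card_pos.1 (hcard ▸ card_pos.2 ⟨m, hmD'⟩)
  by_cases hsub : P ∪ D ⊆ P' ∪ D'
  swap
  · exact h.exists_erasureCoveredEarlier_of_not_subset hDne hsub
  have hmP : m ∈ P := by
    have heq := eq_of_subset_of_card_le hsub (by
      have := h.card_add_one
      have := h'.card_add_one
      rw [card_union_of_disjoint h.disjoint, card_union_of_disjoint h'.disjoint]
      omega)
    exact (mem_union.1 (heq ▸ mem_union_right P' hmD')).resolve_right hmD
  have hnbr (u) (hu : u ∈ D) (hmu : H.Adj m u) : u < m :=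
    hm u hu fun hu' => h'.isIndepSet hmD' hu' hmu.ne hmu
  obtain ⟨e, heD, hem, huniq⟩ : ∃ e ∈ D, e < m ∧ ∀ u ∈ D, H.Adj m u → u = e := by
    by_cases hadj : ∃ u ∈ D, H.Adj m u
    · obtain ⟨u, hu, hmu⟩ := hadj
      exact ⟨u, hu, hnbr u hu hmu, fun u' hu' hmu' =>
        hord m ⟨hmu', hnbr u' hu' hmu'⟩ ⟨hmu, hnbr u hu hmu⟩⟩
    · obtain ⟨e, heD, heD'⟩ := not_subset.1 fun hs =>
        hmD (eq_of_subset_of_card_le hs hcard.le ▸ hmD')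
      exact ⟨e, heD, hm e heD heD', fun u hu hmu => absurd ⟨u, hu, hmu⟩ hadj⟩
  exact ⟨.inr m, by simpa using hmD, by simpa using hmD',
    h.erasureCoveredEarlier_inr hmP heD hem huniq⟩

lemma exists_erasureCoveredEarlier_of_toColex_lt_left (h : IsFacetPair H q P D)
    (h' : IsFacetPair H q P' D) (hP : toColex P < toColex P') :
    ∃ v ∈ whiskerFacet P D, v ∉ whiskerFacet P' D ∧ ErasureCoveredEarlier H q P D v := by
  obtain ⟨m, hmP', hmP, hm⟩ := Colex.toColex_lt_toColex_iff_exists_forall_lt.1 hP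
  have hcard : #P' ≤ #P := by
    have := h.card_add_one
    have := h'.card_add_one
    omega
  obtain ⟨c, hcP, hcP'⟩ := not_subset.1 fun hs => hmP (eq_of_subset_of_card_le hs hcard ▸ hmP')
  obtain hD | hDne := D.eq_empty_or_nonempty
  · exact ⟨.inl c, by simp [hcP], by simpa [hD] using hcP',
      h.erasureCoveredEarlier_inl_of_right_eq_empty hD hcP hmP (hm c hcP hcP')⟩
  · refine h.exists_erasureCoveredEarlier_of_not_subset hDne fun hs => ?_
    rcases mem_union.1 (hs (mem_union_left D hcP)) with hc | hc
    exacts [hcP' hc, disjoint_left.1 h.disjoint hcP hc]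

theorem exists_erasureCoveredEarlier (h : IsFacetPair H q P D)
    (hord : ∀ v, {u | H.Adj v u ∧ u < v}.Subsingleton)
    (h' : IsFacetPair H q P' D') (hlt : pairKey P' D' < pairKey P D) :
    ∃ v ∈ whiskerFacet P D, v ∉ whiskerFacet P' D' ∧ ErasureCoveredEarlier H q P D v := by
  rcases pairKey_lt_iff.1 hlt with hcard | ⟨hcard, hD | ⟨rfl, hP⟩⟩
  · refine h.exists_erasureCoveredEarlier_of_not_subset (card_pos.1 (by omega)) fun hsub => ?_
    have := card_le_card hsub
    rw [card_union_of_disjoint h.disjoint, card_union_of_disjoint h'.disjoint] at this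
    have := h.card_add_one
    have := h'.card_add_one
    omega
  · exact h.exists_erasureCoveredEarlier_of_toColex_lt hord h' hcard hD
  · exact h.exists_erasureCoveredEarlier_of_toColex_lt_left h' hP

end IsFacetPair

end Shelling

section

variable {V : Type*} [Fintype V] {H : SimpleGraph V} {q : ℕ}

theorem shellable_mfFace_whisker (hH : H.IsAcyclic) (hqn : q ≤ Fintype.card V) :
    Shellable (MFFace (whisker H) q) := by
  obtain ⟨wt, hinj, hord⟩ := hH.exists_elimination_order
  let _ : LinearOrder V := LinearOrder.lift' wt hinj
  let key (F : Finset (V ⊕ V)) := pairKey (F.toLeft ∩ F.toRight) F.toRightᶜ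
  have hkey {P D : Finset V} (h : Disjoint P D) : key (whiskerFacet P D) = pairKey P D := by
    simp only [key, whiskerFacet, toLeft_disjSum, toRight_disjSum, compl_compl]
    rw [union_inter_distrib_right, inter_compl, union_empty, inter_eq_left.2]
    exact subset_compl_iff_disjoint_right.2 h
  refine shellable_of_exchange key (fun F G hF hG hFG => ?_) (fun F G hF hG hlt => ?_)
  · obtain ⟨P, D, h, rfl⟩ := hF.exists_isFacetPair hH hqn
    obtain ⟨P', D', h', rfl⟩ := hG.exists_isFacetPair hH hqn
    rw [hkey h.disjoint, hkey h'.disjoint] at hFG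
    obtain ⟨rfl, rfl⟩ := pairKey_injective hFG
    rfl
  · obtain ⟨P, D, h, rfl⟩ := hF.exists_isFacetPair hH hqn
    obtain ⟨P', D', h', rfl⟩ := hG.exists_isFacetPair hH hqn
    rw [hkey h.disjoint, hkey h'.disjoint] at hlt
    obtain ⟨v, hv, hv', P₂, D₂, h₂, hlt₂, hsub⟩ :=
      h.exists_erasureCoveredEarlier hord h' hlt
    exact ⟨v, hv, hv', _, h₂.isFacet, by rwa [hkey h₂.disjoint, hkey h.disjoint], hsub⟩

theorem card_eq_of_isFacet_mfFace_whisker (hH : H.IsAcyclic) (hqn : q ≤ Fintype.card V)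
    {F : Finset (V ⊕ V)} (hF : IsFacet (MFFace (whisker H) q) F) :
    #F = Fintype.card V + q - 1 := by
  classical
  obtain ⟨P, D, h, rfl⟩ := hF.exists_isFacetPair hH hqn
  rw [card_whiskerFacet h.disjoint, ← h.card_add_one]
  omega

end

theorem mfComplex_whisker_forest_pure_shellable_general
    {V : Type*} [Fintype V] (H : SimpleGraph V)
    (hH : H.IsAcyclic) (n : ℕ) (hn : Fintype.card V = n) (ν q : ℕ)
    (hν₁ : ∃ M : Finset (Sym2 (V ⊕ V)),
      IsMatchingOn (whisker H) Finset.univ M ∧ M.card = ν)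
    (hq2 : q ≤ ν) :
    Shellable (MFFace (whisker H) q) ∧
    ∀ F : Finset (V ⊕ V), IsFacet (MFFace (whisker H) q) F →
      F.card = n + q - 1 := by
  classical
  obtain ⟨M, hM, rfl⟩ := hν₁
  have hqn : q ≤ Fintype.card V :=
    hq2.trans (matchingNumberOn_whisker_univ (H := H) ▸ hM.card_le_matchingNumberOn)
  subst hn
  exact ⟨shellable_mfFace_whisker hH hqn, fun F => card_eq_of_isFacet_mfFace_whisker hH hqn⟩

/-- if `H` is a forest on `n` vertices, then for every
`1 ≤ q ≤ ν(W(H))` the complex `MF^q(W(H))` is shellable and pure of dimension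
`n + q - 2` (every facet has cardinality `n + q - 1`). -/
theorem mfComplex_whisker_forest_pure_shellable
    {V : Type*} [Fintype V] [DecidableEq V] (H : SimpleGraph V)
    (hH : H.IsAcyclic) (n : ℕ) (hn : Fintype.card V = n) (ν q : ℕ)
    (hν₁ : ∃ M : Finset (Sym2 (V ⊕ V)),
      IsMatchingOn (whisker H) Finset.univ M ∧ M.card = ν)
    (hν₂ : ∀ M : Finset (Sym2 (V ⊕ V)),
      IsMatchingOn (whisker H) Finset.univ M → M.card ≤ ν)
    (hq1 : 1 ≤ q) (hq2 : q ≤ ν) :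
    Shellable (MFFace (whisker H) q) ∧
    ∀ F : Finset (V ⊕ V), IsFacet (MFFace (whisker H) q) F →
      F.card = n + q - 1 :=
  mfComplex_whisker_forest_pure_shellable_general H hH n hn ν q hν₁ hq2
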